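/- arXiv:1601.07809 — 9 statements merged into one kernel-verified Lean document; each statement's English description precedes it below -/
import Mathlib

section
/- Let r be a positive integer and let A, B, C be nonempty subsets of {1, ..., r} such that every triple (a, b, c) with a ∈ A, b ∈ B, c ∈ C satisfies all three triangle inequalities (a + b ≥ c, a + c ≥ b, b + c ≥ a). If r is even then |A| + |B| + |C| ≤ 3⌈(r+1)/2⌉, and if r is odd then |A| + |B| + |C| ≤ 3⌈(r+1)/2⌉ + 1. -/
/-!
Each set lies between its minimum and the sum of the other two minima (the triangle
inequality at the three minima), as well as below `r`. Since `min r u ≤ (r + u) / 2`,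
twice the total size is at most `3 r + 6` once the three minima cancel; the two parity
cases are this bound rounded down.
-/

/-- `m r = ⌈(r+1)/2⌉`, the midpoint count. -/
def mval (r : ℕ) : ℕ := (r + 2) / 2

open Finset

theorem Finset.card_add_le_of_subset_Icc {s : Finset ℕ} (hs : s.Nonempty) {a b : ℕ}
    (h : s ⊆ Icc a b) : #s + a ≤ b + 1 := by
  obtain ⟨x, hx⟩ := hs
  have hab := mem_Icc.mp (h hx)
  have := card_le_card h
  rw [Nat.card_Icc] at this
  omega

theorem two_mul_card_add_min'_le {A : Finset ℕ} (hA : A.Nonempty) {r u : ℕ}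
    (hr : ∀ a ∈ A, a ≤ r) (hu : ∀ a ∈ A, a ≤ u) :
    2 * (#A + A.min' hA) ≤ r + u + 2 := by
  have hsub : A ⊆ Icc (A.min' hA) (min r u) := fun a ha =>
    mem_Icc.mpr ⟨A.min'_le a ha, le_min (hr a ha) (hu a ha)⟩
  have := card_add_le_of_subset_Icc hA hsub
  omega

theorem two_mul_card_add_card_add_card_le {r : ℕ} {A B C : Finset ℕ}
    (hA : A.Nonempty) (hB : B.Nonempty) (hC : C.Nonempty)
    (hAr : ∀ a ∈ A, a ≤ r) (hBr : ∀ b ∈ B, b ≤ r) (hCr : ∀ c ∈ C, c ≤ r)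
    (hmetric : ∀ a ∈ A, ∀ b ∈ B, ∀ c ∈ C, a + b ≥ c ∧ a + c ≥ b ∧ b + c ≥ a) :
    2 * (#A + #B + #C) ≤ 3 * r + 6 := by
  have hx := A.min'_mem hA
  have hy := B.min'_mem hB
  have hz := C.min'_mem hC
  have hA' := two_mul_card_add_min'_le hA hAr fun a ha => (hmetric a ha _ hy _ hz).2.2
  have hB' := two_mul_card_add_min'_le hB hBr fun b hb => (hmetric _ hx b hb _ hz).2.1
  have hC' := two_mul_card_add_min'_le hC hCr fun c hc => (hmetric _ hx _ hy c hc).1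
  omega

theorem metric_triple_card_bound_general (r : ℕ) (A B C : Finset ℕ)
    (hA : A.Nonempty) (hB : B.Nonempty) (hC : C.Nonempty)
    (hAr : A ⊆ Finset.Icc 1 r) (hBr : B ⊆ Finset.Icc 1 r) (hCr : C ⊆ Finset.Icc 1 r)
    (hmetric : ∀ a ∈ A, ∀ b ∈ B, ∀ c ∈ C, a + b ≥ c ∧ a + c ≥ b ∧ b + c ≥ a) :
    (Even r → A.card + B.card + C.card ≤ 3 * mval r) ∧
    (Odd r → A.card + B.card + C.card ≤ 3 * mval r + 1) := by
  have le_r {S : Finset ℕ} (hS : S ⊆ Icc 1 r) : ∀ s ∈ S, s ≤ r := fun s hs =>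
    (mem_Icc.mp (hS hs)).2
  have hsum := two_mul_card_add_card_add_card_le hA hB hC (le_r hAr) (le_r hBr) (le_r hCr)
    hmetric
  unfold mval
  refine ⟨fun ⟨k, hk⟩ => ?_, fun ⟨k, hk⟩ => ?_⟩ <;> omega

theorem metric_triple_card_bound (r : ℕ) (hr : 0 < r) (A B C : Finset ℕ)
    (hA : A.Nonempty) (hB : B.Nonempty) (hC : C.Nonempty)
    (hAr : A ⊆ Finset.Icc 1 r) (hBr : B ⊆ Finset.Icc 1 r) (hCr : C ⊆ Finset.Icc 1 r)
    (hmetric : ∀ a ∈ A, ∀ b ∈ B, ∀ c ∈ C, a + b ≥ c ∧ a + c ≥ b ∧ b + c ≥ a) :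
    (Even r → A.card + B.card + C.card ≤ 3 * mval r) ∧
    (Odd r → A.card + B.card + C.card ≤ 3 * mval r + 1) :=
  metric_triple_card_bound_general r A B C hA hB hC hAr hBr hCr hmetric
end

section
/- For any finite simple graph G on n vertices, the proper square G² of G satisfies e(G²) ≥ e(G) − ⌊n/2⌋, where e denotes the number of edges. -/
/-!
Induct on a finite set `s` of vertices containing every non-isolated vertex, proving
`e(G) ≤ e(G²) + ⌊|s|/2⌋`. Given an edge `vw`, delete all edges at `v` and `w`; this removes
`d(v) + d(w) - 1` edges of `G`, and the square of the smaller graph misses at least every edge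
of `G²` at `v` or `w`. Since every neighbour of `w` other than `v` is a `G²`-neighbour of `v`
(and symmetrically), these two counts differ by at most one, which the removal of `v` and `w`
from `s` pays for.
-/

/-- `G` is `C₄`-free: no two distinct vertices have two or more common neighbors. -/
def C4Free {V : Type*} (G : SimpleGraph V) : Prop :=
  ∀ x y z w : V, x ≠ y → G.Adj x z → G.Adj y z → G.Adj x w → G.Adj y w → z = w

/-- The proper square of `G`: `x ~ y` iff `x ≠ y` and they have a common neighbor. -/
def properSquare {V : Type*} (G : SimpleGraph V) : SimpleGraph V where
  Adj x y := x ≠ y ∧ ∃ z, G.Adj x z ∧ G.Adj z y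
  symm := by
    constructor
    rintro x y ⟨hxy, z, h1, h2⟩
    exact ⟨hxy.symm, z, h2.symm, h1.symm⟩
  loopless := by constructor; rintro x ⟨h, -⟩; exact h rfl

/-- The degree of vertex `v` in `G`. -/
noncomputable def deg {V : Type*} (G : SimpleGraph V) (v : V) : ℕ :=
  Nat.card {w : V | G.Adj v w}

open Finset

namespace SimpleGraph

variable {V : Type*} {G H : SimpleGraph V} {v w : V}

lemma ncard_incidenceSet (G : SimpleGraph V) (v : V) :
    (G.incidenceSet v).ncard = (G.neighborSet v).ncard := by
  classical
  rw [← Nat.card_coe_set_eq, ← Nat.card_coe_set_eq]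
  exact Nat.card_congr (G.incidenceSetEquivNeighborSet v)

lemma notMem_support_deleteEdges_of_incidenceSet_subset {s : Set (Sym2 V)}
    (h : G.incidenceSet v ⊆ s) : v ∉ (G.deleteEdges s).support := by
  intro hv
  obtain ⟨u, hu⟩ := (G.deleteEdges s).mem_support.mp hv
  rw [deleteEdges_adj] at hu
  exact hu.2 (h ⟨hu.1, Sym2.mem_mk_left v u⟩)

lemma disjoint_edgeSet_incidenceSet_of_notMem_support (hv : v ∉ H.support) :
    Disjoint H.edgeSet (G.incidenceSet v) := by
  rw [Set.disjoint_left]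
  rintro e he ⟨-, hve⟩
  induction e using Sym2.ind with
  | _ a b =>
    rcases Sym2.mem_iff.mp hve with rfl | rfl
    exacts [hv (H.mem_edgeSet.mp he).left_mem_support, hv (H.mem_edgeSet.mp he).right_mem_support]

variable [Finite V]

lemma ncard_incidenceSet_union_add_one_of_adj (h : G.Adj v w) :
    (G.incidenceSet v ∪ G.incidenceSet w).ncard + 1 =
      (G.neighborSet v).ncard + (G.neighborSet w).ncard := by
  rw [← ncard_incidenceSet, ← ncard_incidenceSet, ← Set.ncard_union_add_ncard_inter,
    G.incidenceSet_inter_incidenceSet_of_adj h, Set.ncard_singleton]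

lemma ncard_incidenceSet_union_of_not_adj (hne : v ≠ w) (h : ¬G.Adj v w) :
    (G.incidenceSet v ∪ G.incidenceSet w).ncard =
      (G.neighborSet v).ncard + (G.neighborSet w).ncard := by
  rw [← ncard_incidenceSet, ← ncard_incidenceSet, ← Set.ncard_union_add_ncard_inter,
    G.incidenceSet_inter_incidenceSet_of_not_adj h hne, Set.ncard_empty, add_zero]

lemma ncard_edgeSet_le_deleteEdges_add (G : SimpleGraph V) (s : Set (Sym2 V)) :
    G.edgeSet.ncard ≤ (G.deleteEdges s).edgeSet.ncard + s.ncard := by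
  rw [edgeSet_deleteEdges]
  exact (Set.ncard_le_ncard (Set.subset_sdiff_union _ s)).trans (Set.ncard_union_le _ _)

lemma ncard_edgeSet_add_ncard_incidenceSet_union_le (hle : H ≤ G) (hv : v ∉ H.support)
    (hw : w ∉ H.support) :
    H.edgeSet.ncard + (G.incidenceSet v ∪ G.incidenceSet w).ncard ≤ G.edgeSet.ncard := by
  have hdisj : Disjoint H.edgeSet (G.incidenceSet v ∪ G.incidenceSet w) :=
    Disjoint.union_right (disjoint_edgeSet_incidenceSet_of_notMem_support hv)
      (disjoint_edgeSet_incidenceSet_of_notMem_support hw)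
  rw [← Set.ncard_union_eq hdisj]
  exact Set.ncard_le_ncard <| Set.union_subset (edgeSet_mono hle)
    (Set.union_subset (G.incidenceSet_subset v) (G.incidenceSet_subset w))

end SimpleGraph

section properSquare

open SimpleGraph

variable {V : Type*} {G H : SimpleGraph V} {v w : V}

lemma properSquare_mono (h : G ≤ H) : properSquare G ≤ properSquare H :=
  fun _ _ ⟨hne, z, h₁, h₂⟩ => ⟨hne, z, h h₁, h h₂⟩

lemma support_properSquare_subset (G : SimpleGraph V) :
    (properSquare G).support ⊆ G.support := by
  intro x hx
  obtain ⟨-, -, _, hxz, -⟩ := (properSquare G).mem_support.mp hx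
  exact hxz.left_mem_support

lemma neighborSet_diff_subset_properSquare_neighborSet_diff (h : G.Adj v w) :
    G.neighborSet w \ {v} ⊆ (properSquare G).neighborSet v \ {w} :=
  fun _ ⟨hz, hzv⟩ => ⟨⟨fun e => hzv e.symm, w, h, hz⟩, fun e => G.loopless.irrefl w (e ▸ hz)⟩

variable [Finite V]

lemma ncard_incidenceSet_union_le_properSquare_add_one (h : G.Adj v w) :
    (G.incidenceSet v ∪ G.incidenceSet w).ncard ≤
      ((properSquare G).incidenceSet v ∪ (properSquare G).incidenceSet w).ncard + 1 := by
  have hG := ncard_incidenceSet_union_add_one_of_adj h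
  have hv := Set.ncard_sdiff_singleton_add_one (show w ∈ G.neighborSet v from h)
  have hw := Set.ncard_sdiff_singleton_add_one (show v ∈ G.neighborSet w from h.symm)
  have hv' := Set.ncard_le_ncard (neighborSet_diff_subset_properSquare_neighborSet_diff h.symm)
  have hw' := Set.ncard_le_ncard (neighborSet_diff_subset_properSquare_neighborSet_diff h)
  by_cases hsq : (properSquare G).Adj v w
  · have hsq₂ := ncard_incidenceSet_union_add_one_of_adj hsq
    have hsv := Set.ncard_sdiff_singleton_add_one (show w ∈ (properSquare G).neighborSet v from hsq)
    have hsw := Set.ncard_sdiff_singleton_add_one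
      (show v ∈ (properSquare G).neighborSet w from hsq.symm)
    omega
  · have hsq₂ := ncard_incidenceSet_union_of_not_adj h.ne hsq
    rw [Set.sdiff_singleton_eq_self (show w ∉ (properSquare G).neighborSet v from hsq)] at hw'
    rw [Set.sdiff_singleton_eq_self (show v ∉ (properSquare G).neighborSet w from
      fun h' => hsq h'.symm)] at hv'
    omega

theorem ncard_edgeSet_le_properSquare_add_of_support_subset (G : SimpleGraph V) (s : Finset V)
    (hs : G.support ⊆ s) :
    G.edgeSet.ncard ≤ (properSquare G).edgeSet.ncard + #s / 2 := by
  classical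
  induction s using Finset.strongInduction generalizing G with
  | H s ih =>
  obtain rfl | ⟨v, w, h⟩ := eq_or_ne G ⊥ |>.imp_right ne_bot_iff_exists_adj.mp
  · simp
  set G' := G.deleteEdges (G.incidenceSet v ∪ G.incidenceSet w)
  have hv : v ∉ G'.support :=
    notMem_support_deleteEdges_of_incidenceSet_subset Set.subset_union_left
  have hw : w ∉ G'.support :=
    notMem_support_deleteEdges_of_incidenceSet_subset Set.subset_union_right
  have hvws : {v, w} ⊆ s := by
    simpa [Finset.insert_subset_iff] using ⟨hs h.left_mem_support, hs h.right_mem_support⟩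
  have hcard := Finset.card_sdiff_add_card_eq_card hvws
  rw [Finset.card_pair h.ne] at hcard
  have hs' : G'.support ⊆ ↑(s \ {v, w}) := fun x hx => by
    have hxs := hs (support_mono (G.deleteEdges_le _) hx)
    simp only [coe_sdiff, coe_insert, coe_singleton, Set.mem_sdiff, Set.mem_insert_iff,
      Set.mem_singleton_iff]
    exact ⟨hxs, by rintro (rfl | rfl) <;> contradiction⟩
  have hind := ih (s \ {v, w}) (Finset.sdiff_ssubset hvws ⟨v, by simp⟩) G' hs'
  have hdel : G.edgeSet.ncard ≤ G'.edgeSet.ncard + (G.incidenceSet v ∪ G.incidenceSet w).ncard :=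
    ncard_edgeSet_le_deleteEdges_add G _
  have hsq : (properSquare G').edgeSet.ncard +
      ((properSquare G).incidenceSet v ∪ (properSquare G).incidenceSet w).ncard ≤
        (properSquare G).edgeSet.ncard :=
    ncard_edgeSet_add_ncard_incidenceSet_union_le (properSquare_mono (G.deleteEdges_le _))
      (fun hv' => hv (support_properSquare_subset G' hv'))
      (fun hw' => hw (support_properSquare_subset G' hw'))
  have hloc := ncard_incidenceSet_union_le_properSquare_add_one h
  omega

end properSquare

theorem furedi_proper_square (n : ℕ) (G : SimpleGraph (Fin n)) :
    Nat.card G.edgeSet ≤ Nat.card (properSquare G).edgeSet + n / 2 := by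
  simpa only [Nat.card_coe_set_eq, Finset.card_univ, Fintype.card_fin] using
    ncard_edgeSet_le_properSquare_add_of_support_subset G Finset.univ (by simp)
end

section
/- If G is a C₄-free simple graph on n vertices, then the number of edges of G satisfies e(G) ≤ (1/2)·n^{3/2} + n. -/
/-!
Counting cherries: every ordered pair of distinct vertices has at most one common neighbour, so
`∑ d(v) (d(v) - 1) ≤ n (n - 1)`. Hence `∑ d(v)² ≤ n² + 2e`, and Cauchy–Schwarz gives
`4e² = (∑ d(v))² ≤ n (n² + 2e)`; solving this quadratic inequality for `e` yields the bound.
-/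

open Finset

theorem SimpleGraph.sq_two_mul_card_edgeFinset_le {V : Type*} [Fintype V] (G : SimpleGraph V)
    [DecidableRel G.Adj] :
    (2 * #G.edgeFinset) ^ 2 ≤ Fintype.card V * ∑ v, G.degree v ^ 2 := by
  rw [← G.sum_degrees_eq_twice_card_edges, ← card_univ]
  exact sq_sum_le_card_mul_sum_sq

theorem le_rpow_three_halves_div_two_add_of_four_mul_sq_le {x n : ℝ} (hn : 0 ≤ n)
    (h : 4 * x ^ 2 ≤ n ^ 3 + 2 * n * x) : x ≤ n ^ ((3 : ℝ) / 2) / 2 + n := by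
  obtain ⟨s, hs, rfl⟩ : ∃ s, 0 ≤ s ∧ n = s ^ 2 := ⟨√n, Real.sqrt_nonneg n, (Real.sq_sqrt hn).symm⟩
  have hpow : (s ^ 2) ^ ((3 : ℝ) / 2) = s ^ 3 := by
    rw [← Real.rpow_natCast, ← Real.rpow_natCast, ← Real.rpow_mul hs]
    norm_num
  rw [hpow]
  by_contra! hx
  -- `(2x - s³)(2x + s³) = 4x² - s⁶ ≤ 2s²x`, yet the left factor exceeds `2s²`.
  have hgap : 2 * s ^ 2 < 2 * x - s ^ 3 := by linarith
  have hx0 : 0 ≤ x := by linarith [pow_nonneg hs 2, pow_nonneg hs 3]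
  have hsum : 0 < 2 * x + s ^ 3 := by linarith [pow_nonneg hs 2, pow_nonneg hs 3]
  nlinarith [mul_lt_mul_of_pos_right hgap hsum, pow_nonneg hs 5, mul_nonneg (pow_nonneg hs 2) hx0]

namespace C4Free

variable {V : Type*} {G : SimpleGraph V}

theorem pairwiseDisjoint_offDiag_neighborFinset [DecidableEq V] [G.LocallyFinite]
    (h : C4Free G) :
    (Set.univ : Set V).PairwiseDisjoint fun v => (G.neighborFinset v).offDiag := by
  intro v _ w _ hvw
  rw [Function.onFun, disjoint_left]
  rintro ⟨x, y⟩ hv hw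
  simp only [mem_offDiag, SimpleGraph.mem_neighborFinset] at hv hw
  exact hvw (h x y v w hv.2.2 hv.1.symm hv.2.1.symm hw.1.symm hw.2.1.symm)

variable [Fintype V] [DecidableEq V] [DecidableRel G.Adj]

theorem sum_card_offDiag_neighborFinset_le (h : C4Free G) :
    ∑ v, #(G.neighborFinset v).offDiag ≤ #(univ : Finset V).offDiag := by
  rw [← card_biUnion fun v _ w _ => h.pairwiseDisjoint_offDiag_neighborFinset trivial trivial]
  exact card_le_card <| biUnion_subset.2 fun v _ => offDiag_mono (subset_univ _)

theorem sum_degree_sq_le (h : C4Free G) :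
    ∑ v, G.degree v ^ 2 ≤ Fintype.card V ^ 2 + 2 * #G.edgeFinset := by
  have hoff : ∀ s : Finset V, #s.offDiag + #s = #s ^ 2 := fun s => by
    rw [offDiag_card, sq, Nat.sub_add_cancel (Nat.le_mul_self _)]
  calc ∑ v, G.degree v ^ 2 = ∑ v, #(G.neighborFinset v).offDiag + ∑ v, G.degree v := by
        rw [← sum_add_distrib]
        exact sum_congr rfl fun v _ => by
          rw [← G.card_neighborFinset_eq_degree, hoff]
    _ ≤ #(univ : Finset V).offDiag + 2 * #G.edgeFinset := by
        rw [G.sum_degrees_eq_twice_card_edges]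
        gcongr
        exact h.sum_card_offDiag_neighborFinset_le
    _ ≤ Fintype.card V ^ 2 + 2 * #G.edgeFinset := by
        gcongr
        rw [← card_univ, ← hoff]
        exact Nat.le_add_right _ _

end C4Free

theorem c4free_edge_bound (n : ℕ) (G : SimpleGraph (Fin n)) (h : C4Free G) :
    (Nat.card G.edgeSet : ℝ) ≤ (n : ℝ) ^ ((3 : ℝ) / 2) / 2 + n := by
  classical
  have hquad : 4 * #G.edgeFinset ^ 2 ≤ n ^ 3 + 2 * n * #G.edgeFinset :=
    calc 4 * #G.edgeFinset ^ 2 = (2 * #G.edgeFinset) ^ 2 := by ring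
      _ ≤ Fintype.card (Fin n) * ∑ v, G.degree v ^ 2 := G.sq_two_mul_card_edgeFinset_le
      _ ≤ n * (n ^ 2 + 2 * #G.edgeFinset) := by
        simpa only [Fintype.card_fin] using Nat.mul_le_mul_left n h.sum_degree_sq_le
      _ = n ^ 3 + 2 * n * #G.edgeFinset := by ring
  rw [Nat.card_eq_fintype_card, ← SimpleGraph.edgeFinset_card]
  exact le_rpow_three_halves_div_two_add_of_four_mul_sq_le n.cast_nonneg (by exact_mod_cast hquad)
end

section
/- If G is a C₄-free bipartite simple graph with parts of sizes a and b where a ≤ b, then e(G) ≤ a·√b + 2b. -/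
open Finset SimpleGraph Function

lemma card_offDiag_add_card {α : Type*} (s : Finset α) :
    #s.offDiag + #s = #s ^ 2 := by
  rw [offDiag_card, sq]
  have := Nat.le_mul_self #s
  omega

lemma sum_card_sq_le_of_pairwiseDisjoint_offDiag {ι α : Type*} [DecidableEq α]
    {t : Finset ι} {s : Finset α} {N : ι → Finset α} (hN : ∀ i ∈ t, N i ⊆ s)
    (hdisj : (t : Set ι).PairwiseDisjoint fun i => (N i).offDiag) :
    ∑ i ∈ t, #(N i) ^ 2 ≤ #s ^ 2 + ∑ i ∈ t, #(N i) := by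
  have hoff : ∑ i ∈ t, #(N i).offDiag ≤ #s.offDiag := by
    rw [← card_biUnion hdisj]
    exact card_le_card (biUnion_subset.2 fun i hi => offDiag_mono (hN i hi))
  calc ∑ i ∈ t, #(N i) ^ 2 = ∑ i ∈ t, #(N i).offDiag + ∑ i ∈ t, #(N i) := by
        simp only [← sum_add_distrib, card_offDiag_add_card]
    _ ≤ #s.offDiag + ∑ i ∈ t, #(N i) := by gcongr
    _ ≤ #s ^ 2 + ∑ i ∈ t, #(N i) := by
        gcongr
        have := card_offDiag_add_card s
        omega

section C4Free

variable {V : Type*} [Fintype V] {G : SimpleGraph V} [DecidableRel G.Adj]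

lemma C4Free.pairwise_disjoint_offDiag_neighborFinset (h : C4Free G) :
    Pairwise (Disjoint on fun v => (G.neighborFinset v).offDiag) := by
  intro z w hzw
  rw [onFun, Finset.disjoint_left]
  rintro ⟨x, y⟩ hz hw
  simp only [mem_offDiag, mem_neighborFinset] at hz hw
  exact hzw (h x y z w hz.2.2 hz.1.symm hz.2.1.symm hw.1.symm hw.2.1.symm)

lemma C4Free.card_edgeFinset_sq_le [DecidableEq V] {s t : Finset V} (h : C4Free G)
    (hG : G.IsBipartiteWith s t) :
    #G.edgeFinset ^ 2 ≤ #t * (#s ^ 2 + #G.edgeFinset) := by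
  rw [← isBipartiteWith_sum_degrees_eq_card_edges' hG]
  calc (∑ w ∈ t, G.degree w) ^ 2 ≤ #t * ∑ w ∈ t, G.degree w ^ 2 := sq_sum_le_card_mul_sum_sq
    _ ≤ #t * (#s ^ 2 + ∑ w ∈ t, G.degree w) := by
        gcongr
        simp only [← card_neighborFinset_eq_degree]
        exact sum_card_sq_le_of_pairwiseDisjoint_offDiag
          (fun _ => isBipartiteWith_neighborFinset_subset' hG)
          ((C4Free.pairwise_disjoint_offDiag_neighborFinset h).set_pairwise t)

end C4Free

lemma le_mul_sqrt_add_of_sq_le_mul {e a b : ℝ} (ha : 0 ≤ a) (hb : 0 ≤ b)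
    (h : e ^ 2 ≤ b * (a ^ 2 + e)) : e ≤ a * √b + b := by
  by_contra! hlt
  -- `e (e - b) > (a √b + b) a √b ≥ a² b`
  nlinarith [Real.sq_sqrt hb, Real.sqrt_nonneg b, mul_nonneg ha (Real.sqrt_nonneg b),
    mul_nonneg (mul_nonneg ha (Real.sqrt_nonneg b)) hb]

lemma isBipartiteWith_map_inl_map_inr {α β : Type*} [Fintype α] [Fintype β]
    {G : SimpleGraph (α ⊕ β)}
    (hbip : ∀ x y, G.Adj x y →
      (x.isLeft = true ∧ y.isRight = true) ∨ (x.isRight = true ∧ y.isLeft = true)) :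
    G.IsBipartiteWith ↑(univ.map (.inl : α ↪ α ⊕ β)) ↑(univ.map (.inr : β ↪ α ⊕ β)) where
  disjoint := disjoint_coe.2 (disjoint_map_inl_map_inr _ _)
  mem_of_adj x y hxy := by
    have hxy := hbip x y hxy
    cases x <;> cases y <;> simp at hxy ⊢

theorem c4free_bipartite_edge_bound_general (a b : ℕ)
    (G : SimpleGraph (Fin a ⊕ Fin b))
    (hbip : ∀ x y, G.Adj x y →
      (x.isLeft = true ∧ y.isRight = true) ∨ (x.isRight = true ∧ y.isLeft = true))
    (h : C4Free G) :
    (Nat.card G.edgeSet : ℝ) ≤ (a : ℝ) * Real.sqrt b + 2 * b := by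
  classical
  have hsq := C4Free.card_edgeFinset_sq_le h (isBipartiteWith_map_inl_map_inr hbip)
  simp only [card_map, card_univ, Fintype.card_fin] at hsq
  rw [Nat.card_eq_fintype_card, ← edgeFinset_card]
  have hle := le_mul_sqrt_add_of_sq_le_mul (e := #G.edgeFinset) (a := a) (b := b)
    (by positivity) (by positivity) (by exact_mod_cast hsq)
  linarith [b.cast_nonneg' (α := ℝ)]

theorem c4free_bipartite_edge_bound (a b : ℕ) (hab : a ≤ b)
    (G : SimpleGraph (Fin a ⊕ Fin b))
    (hbip : ∀ x y, G.Adj x y →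
      (x.isLeft = true ∧ y.isRight = true) ∨ (x.isRight = true ∧ y.isLeft = true))
    (h : C4Free G) :
    (Nat.card G.edgeSet : ℝ) ≤ (a : ℝ) * Real.sqrt b + 2 * b :=
  c4free_bipartite_edge_bound_general a b G hbip h
end

section
/- Let G be a C₄-free graph on n vertices, and order the vertices v₁, ..., vₙ so that for each i, vᵢ has minimum degree in the induced subgraph G[{vᵢ, ..., vₙ}]. Let dᵢ* denote the degree of vᵢ in G[{vᵢ, ..., vₙ}]. Then for every i, dᵢ* ≤ √(n − i + 1) + 1. -/
/-- Degree of `v` among the vertices `k ≥ i`. -/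
noncomputable def degAbove {n : ℕ} (G : SimpleGraph (Fin n)) (i v : Fin n) : ℕ :=
  Nat.card {k : Fin n | i ≤ k ∧ G.Adj v k}

/-!
Fix `i` and let `A` be the set of right neighbours of `i`, of size `d`. By minimality of the
degree of `i`, every `a ∈ A` has at least `d` neighbours among the vertices `≥ i`, so there are at
least `d²` edges `a ~ k` with `a ∈ A`, `k ≥ i`. Counting them by `k` instead: `k = i` is adjacent to
all `d` of them, and every other `k` to at most one, since `i` and `k` have no two common
neighbours. Hence `d² ≤ d + (n - i - 1)`, which forces `d ≤ √(n - i) + 1`.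
-/

open Finset

namespace C4Free

variable {V : Type*} {G : SimpleGraph V} [DecidableRel G.Adj]

theorem card_filter_adj_le_one (hG : C4Free G) {v k : V} (hvk : v ≠ k) {A : Finset V}
    (hA : ∀ a ∈ A, G.Adj v a) : #{a ∈ A | G.Adj a k} ≤ 1 := by
  refine card_le_one.2 fun a ha b hb => ?_
  rw [mem_filter] at ha hb
  exact hG v k a b hvk (hA a ha.1) ha.2.symm (hA b hb.1) hb.2.symm

theorem sum_card_filter_adj_le [DecidableEq V] (hG : C4Free G) {v : V} {A : Finset V}
    (hA : ∀ a ∈ A, G.Adj v a) (S : Finset V) :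
    ∑ a ∈ A, #{k ∈ S | G.Adj a k} ≤ #A + #(S.erase v) := by
  calc ∑ a ∈ A, #{k ∈ S | G.Adj a k}
      = ∑ k ∈ S, #{a ∈ A | G.Adj a k} := by simp only [card_filter]; exact sum_comm
    _ ≤ ∑ k ∈ insert v (S.erase v), #{a ∈ A | G.Adj a k} :=
        sum_le_sum_of_subset (insert_erase_subset v S)
    _ = #{a ∈ A | G.Adj a v} + ∑ k ∈ S.erase v, #{a ∈ A | G.Adj a k} :=
        sum_insert (notMem_erase v S)
    _ ≤ #A + ∑ _k ∈ S.erase v, 1 :=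
        add_le_add (card_filter_le _ _) (sum_le_sum fun k hk =>
          hG.card_filter_adj_le_one (ne_of_mem_erase hk).symm hA)
    _ = #A + #(S.erase v) := by rw [sum_const, smul_eq_mul, mul_one]

end C4Free

theorem Real.le_sqrt_add_one_of_mul_self_le {d x : ℝ} (h : d * d ≤ d + x) : d ≤ √x + 1 := by
  rcases le_or_gt d 1 with hd | hd
  · linarith [Real.sqrt_nonneg x]
  · have : d - 1 ≤ √x := Real.le_sqrt_of_sq_le (by nlinarith)
    linarith

section degAbove

variable {n : ℕ} (G : SimpleGraph (Fin n)) [DecidableRel G.Adj]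

theorem degAbove_eq_card (i v : Fin n) : degAbove G i v = #{k ∈ Ici i | G.Adj v k} := by
  rw [degAbove, Nat.card_eq_fintype_card, Fintype.card_subtype]
  congr 1
  ext k
  simp

theorem degAbove_self (i : Fin n) : degAbove G i i = #{k ∈ Ioi i | G.Adj i k} := by
  rw [degAbove_eq_card]
  congr 1
  ext k
  simp only [mem_filter, mem_Ici, mem_Ioi]
  exact ⟨fun ⟨hik, hadj⟩ => ⟨lt_of_le_of_ne hik (G.ne_of_adj hadj), hadj⟩,
    fun ⟨hik, hadj⟩ => ⟨hik.le, hadj⟩⟩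

theorem natCard_setOf_lt_and_adj (i : Fin n) :
    Nat.card {j : Fin n | i < j ∧ G.Adj i j} = #{k ∈ Ioi i | G.Adj i k} := by
  rw [Nat.card_eq_fintype_card, Fintype.card_subtype]
  congr 1
  ext k
  simp

end degAbove

theorem right_degree_bound (n : ℕ) (G : SimpleGraph (Fin n)) (h : C4Free G)
    (hmin : ∀ i j : Fin n, i ≤ j → degAbove G i i ≤ degAbove G i j) :
    ∀ i : Fin n,
      (Nat.card {j : Fin n | i < j ∧ G.Adj i j} : ℝ) ≤
        Real.sqrt ((n : ℝ) - (i : ℕ)) + 1 := by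
  classical
  intro i
  set A : Finset (Fin n) := {k ∈ Ioi i | G.Adj i k}
  have hA : ∀ a ∈ A, G.Adj i a := fun a ha => (mem_filter.1 ha).2
  have hlower : #A * #A ≤ ∑ a ∈ A, #{k ∈ Ici i | G.Adj a k} := by
    refine card_nsmul_le_sum A _ _ fun a ha => ?_
    rw [← degAbove_self, ← degAbove_eq_card]
    exact hmin i a (mem_Ioi.1 (mem_filter.1 ha).1).le
  have hupper := h.sum_card_filter_adj_le hA (Ici i)
  have hrest : #((Ici i).erase i) ≤ n - i :=
    card_erase_le.trans (Fin.card_Ici i).le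
  have hcast : ((n - i : ℕ) : ℝ) = n - i := Nat.cast_sub i.isLt.le
  rw [natCard_setOf_lt_and_adj]
  apply Real.le_sqrt_add_one_of_mul_self_le
  rw [← hcast]
  exact_mod_cast (hlower.trans hupper).trans (Nat.add_le_add_left hrest _)
end

section
/- Let r be an odd positive integer and let S be a function assigning to each edge f of the complete graph Kₙ a nonempty subset S(f) ⊆ {1, ..., r}, such that for every triangle {e, f, g} in Kₙ and every a ∈ S(e), b ∈ S(f), c ∈ S(g), the triple (a,b,c) satisfies the triangle inequality. Then Σ_f |S(f)| ≤ m(r)·C(n, 2) + r·n, where m(r) = ⌈(r+1)/2⌉. -/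
/-!
Write `lo e` and `hi e` for the least and the largest label of an edge `e`. The triangle
inequality gives `hi xz ≤ lo xy + lo yz`, and `|S e| ≤ hi e - lo e + 1`, where
`∑ (hi e - lo e)` counts the pairs `(e, k)` with `lo e ≤ k < hi e`, `1 ≤ k ≤ r - 1`.
Fix `k` and let `G` be the graph of the edges with `lo ≤ ⌊k/2⌋`. Every edge of the proper
square `G²` has `hi ≤ k`, so the edges with `lo ≤ k < hi` and the edges of `G²` are disjoint
sets of edges with `lo ≤ k`; by Füredi's lemma `e(G) ≤ e(G²) + ⌊n/2⌋` this gives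
`#{lo ≤ k < hi} ≤ #{lo ≤ k} - #{lo ≤ ⌊k/2⌋} + ⌊n/2⌋`. Summed over `k`, an edge contributes
`#{k ≤ r - 1 | lo ≤ k < 2 lo} ≤ ⌊r/2⌋` to the first two terms.
-/

open Finset

theorem two_le_div_add_div {a b : ℚ} (ha : 0 < a) (hb : 0 < b) : 2 ≤ a / b + b / a := by
  rw [div_add_div _ _ hb.ne' ha.ne', le_div_iff₀ (by positivity)]
  nlinarith [sq_nonneg (a - b)]

namespace SimpleGraph

variable {V : Type*} (G : SimpleGraph V)

def properSquare : SimpleGraph V where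
  Adj x z := x ≠ z ∧ ∃ y, G.Adj x y ∧ G.Adj y z
  symm := ⟨fun _ _ ⟨h, y, hxy, hyz⟩ => ⟨h.symm, y, hyz.symm, hxy.symm⟩⟩
  loopless := ⟨fun _ h => h.1 rfl⟩

instance [Fintype V] [DecidableEq V] [DecidableRel G.Adj] : DecidableRel G.properSquare.Adj :=
  fun _ _ => inferInstanceAs (Decidable (_ ∧ _))

variable [Fintype V] [DecidableRel G.Adj]

def maxNeighborDegree (v : V) : ℕ := (G.neighborFinset v).sup fun w => G.degree w

/- The sum `∑_v ∑_{w ~ v} d w / d v` over arcs is at most `∑ v, maxNeighborDegree v`, and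
pairing each arc with its reverse, `d w / d v + d v / d w ≥ 2` shows it is at least the number
of arcs `∑ v, d v`. -/
theorem sum_degree_le_sum_maxNeighborDegree : ∑ v, G.degree v ≤ ∑ v, G.maxNeighborDegree v := by
  let d : V → ℚ := fun v => G.degree v
  have hpos : ∀ v w, G.Adj v w → 0 < d v := fun v w h => by
    simpa [d] using G.degree_pos_iff_exists_adj v |>.2 ⟨w, h⟩
  have hswap : ∑ v, ∑ w ∈ G.neighborFinset v, d w / d v
      = ∑ v, ∑ w ∈ G.neighborFinset v, d v / d w :=
    Finset.sum_comm' fun v w => by simp [G.adj_comm]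
  have hamgm : ∑ v, d v * 2 ≤ ∑ v, ∑ w ∈ G.neighborFinset v, (d w / d v + d v / d w) := by
    refine sum_le_sum fun v _ => ?_
    rw [show d v * 2 = ∑ w ∈ G.neighborFinset v, (2 : ℚ) by simp [d]]
    refine sum_le_sum fun w hw => ?_
    rw [mem_neighborFinset] at hw
    exact two_le_div_add_div (hpos w v hw.symm) (hpos v w hw)
  have hmax : ∀ v, ∑ w ∈ G.neighborFinset v, d w / d v ≤ G.maxNeighborDegree v := by
    intro v
    rcases (G.neighborFinset v).eq_empty_or_nonempty with h | ⟨w, hw⟩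
    · simp [h]
    rw [← Finset.sum_div, div_le_iff₀ (hpos v w ((G.mem_neighborFinset v w).1 hw))]
    have := sum_le_card_nsmul (G.neighborFinset v) (fun w => G.degree w) _ fun w hw =>
      le_sup (f := fun w => G.degree w) hw
    simp only [card_neighborFinset_eq_degree, smul_eq_mul] at this
    simp only [d, maxNeighborDegree]
    exact_mod_cast this.trans_eq (mul_comm _ _)
  simp only [sum_add_distrib] at hamgm
  rw [← hswap, ← sum_mul] at hamgm
  have hsum_max := sum_le_sum fun v (_ : v ∈ univ) => hmax v
  have key : ∑ v, d v ≤ ∑ v, (G.maxNeighborDegree v : ℚ) := by linarith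
  simp only [d] at key
  exact_mod_cast key

theorem maxNeighborDegree_le_degree_properSquare_add_one [DecidableEq V] (v : V) :
    G.maxNeighborDegree v ≤ G.properSquare.degree v + 1 := by
  refine Finset.sup_le fun y hy => ?_
  rw [← card_neighborFinset_eq_degree, ← card_neighborFinset_eq_degree]
  refine (card_le_card fun w hw => ?_).trans (card_insert_le v _)
  rw [mem_neighborFinset] at hy hw
  rw [mem_insert, mem_neighborFinset]
  by_cases hwv : w = v
  · exact .inl hwv
  · exact .inr ⟨Ne.symm hwv, y, hy, hw⟩

theorem card_edgeFinset_le_card_edgeFinset_properSquare_add [DecidableEq V] :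
    #G.edgeFinset ≤ #G.properSquare.edgeFinset + Fintype.card V / 2 := by
  have := calc 2 * #G.edgeFinset
      = ∑ v, G.degree v := G.sum_degrees_eq_twice_card_edges.symm
    _ ≤ ∑ v, G.maxNeighborDegree v := G.sum_degree_le_sum_maxNeighborDegree
    _ ≤ ∑ v, (G.properSquare.degree v + 1) :=
        sum_le_sum fun v _ => G.maxNeighborDegree_le_degree_properSquare_add_one v
    _ = 2 * #G.properSquare.edgeFinset + Fintype.card V := by
        rw [sum_add_distrib, sum_degrees_eq_twice_card_edges, sum_const, card_univ,
          smul_eq_mul, mul_one]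
  omega

end SimpleGraph

theorem card_filter_Icc_le_lt {a b r : ℕ} (ha : 1 ≤ a) (hb : b ≤ r) :
    #{k ∈ Icc 1 (r - 1) | a ≤ k ∧ k < b} = b - a := by
  rw [show {k ∈ Icc 1 (r - 1) | a ≤ k ∧ k < b} = Icc a (b - 1) by ext; simp; omega,
    Nat.card_Icc]
  omega

theorem card_filter_Icc_le_le_card_filter_Icc_le_div_two_add (a r : ℕ) :
    #{k ∈ Icc 1 (r - 1) | a ≤ k} ≤ #{k ∈ Icc 1 (r - 1) | a ≤ k / 2} + r / 2 := by
  rw [show {k ∈ Icc 1 (r - 1) | a ≤ k} = Icc (max a 1) (r - 1) by ext; simp; omega,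
    show {k ∈ Icc 1 (r - 1) | a ≤ k / 2} = Icc (max (2 * a) 1) (r - 1) by ext; simp; omega,
    Nat.card_Icc, Nat.card_Icc]
  omega

open SimpleGraph

section Labelling

variable {V : Type*} [Fintype V] [DecidableEq V] (lo hi : Sym2 V → ℕ)

theorem card_filter_le_lt_add_card_filter_le_div_two
    (hlohi : ∀ e ∈ (⊤ : SimpleGraph V).edgeFinset, lo e ≤ hi e)
    (hmetric : ∀ x y z : V, x ≠ y → y ≠ z → x ≠ z → hi s(x, z) ≤ lo s(x, y) + lo s(y, z))
    (k : ℕ) :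
    #{e ∈ (⊤ : SimpleGraph V).edgeFinset | lo e ≤ k ∧ k < hi e}
        + #{e ∈ (⊤ : SimpleGraph V).edgeFinset | lo e ≤ k / 2}
      ≤ #{e ∈ (⊤ : SimpleGraph V).edgeFinset | lo e ≤ k} + Fintype.card V / 2 := by
  classical
  let G : SimpleGraph V := fromEdgeSet {e | lo e ≤ k / 2}
  have hsquare : ∀ e ∈ G.properSquare.edgeFinset,
      e ∈ (⊤ : SimpleGraph V).edgeFinset ∧ hi e ≤ k := by
    intro e
    induction e using Sym2.ind with
    | _ x z =>
      rintro he
      obtain ⟨hxz, y, hxy, hyz⟩ := (mem_edgeFinset.1 he : G.properSquare.Adj x z)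
      simp only [G, fromEdgeSet_adj, Set.mem_ofPred_eq] at hxy hyz
      refine ⟨by simpa using hxz, ?_⟩
      have := hmetric x y z hxy.2 hyz.2 hxz
      omega
  have hdisj : Disjoint {e ∈ (⊤ : SimpleGraph V).edgeFinset | lo e ≤ k ∧ k < hi e}
      G.properSquare.edgeFinset :=
    disjoint_right.2 fun e he h => by have := hsquare e he; simp at h; omega
  have hunion : {e ∈ (⊤ : SimpleGraph V).edgeFinset | lo e ≤ k ∧ k < hi e}
      ∪ G.properSquare.edgeFinset ⊆ {e ∈ (⊤ : SimpleGraph V).edgeFinset | lo e ≤ k} := by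
    refine union_subset (fun e he => ?_) (fun e he => ?_)
    · simp only [mem_filter] at he ⊢; exact ⟨he.1, he.2.1⟩
    · obtain ⟨htop, hhi⟩ := hsquare e he
      exact mem_filter.2 ⟨htop, (hlohi e htop).trans hhi⟩
  have hcount := card_le_card hunion
  rw [card_union_of_disjoint hdisj] at hcount
  have hfuredi : #{e ∈ (⊤ : SimpleGraph V).edgeFinset | lo e ≤ k / 2}
      ≤ #G.properSquare.edgeFinset + Fintype.card V / 2 := by
    convert G.card_edgeFinset_le_card_edgeFinset_properSquare_add using 2
    ext e; simp [G, and_comm]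
  omega

theorem sum_hi_sub_lo_le {r : ℕ}
    (hlo : ∀ e ∈ (⊤ : SimpleGraph V).edgeFinset, 1 ≤ lo e)
    (hhi : ∀ e ∈ (⊤ : SimpleGraph V).edgeFinset, hi e ≤ r)
    (hlohi : ∀ e ∈ (⊤ : SimpleGraph V).edgeFinset, lo e ≤ hi e)
    (hmetric : ∀ x y z : V, x ≠ y → y ≠ z → x ≠ z → hi s(x, z) ≤ lo s(x, y) + lo s(y, z)) :
    ∑ e ∈ (⊤ : SimpleGraph V).edgeFinset, (hi e - lo e)
      ≤ r / 2 * (Fintype.card V).choose 2 + (r - 1) * (Fintype.card V / 2) := by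
  set E := (⊤ : SimpleGraph V).edgeFinset
  set K := Icc 1 (r - 1)
  have hswap (P : Sym2 V → ℕ → Prop) [∀ e k, Decidable (P e k)] :
      ∑ k ∈ K, #{e ∈ E | P e k} = ∑ e ∈ E, #{k ∈ K | P e k} :=
    (sum_card_bipartiteAbove_eq_sum_card_bipartiteBelow (r := P)).symm
  have hlayers : ∑ e ∈ E, (hi e - lo e) = ∑ k ∈ K, #{e ∈ E | lo e ≤ k ∧ k < hi e} := by
    rw [hswap]
    exact sum_congr rfl fun e he => (card_filter_Icc_le_lt (hlo e he) (hhi e he)).symm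
  have hthreshold : ∑ k ∈ K, #{e ∈ E | lo e ≤ k ∧ k < hi e} + ∑ k ∈ K, #{e ∈ E | lo e ≤ k / 2}
      ≤ ∑ k ∈ K, #{e ∈ E | lo e ≤ k} + (r - 1) * (Fintype.card V / 2) := by
    rw [← sum_add_distrib]
    refine (sum_le_sum fun k _ =>
      card_filter_le_lt_add_card_filter_le_div_two lo hi hlohi hmetric k).trans_eq ?_
    rw [sum_add_distrib, sum_const, Nat.card_Icc, Nat.add_sub_cancel, smul_eq_mul]
  have hhalf : ∑ k ∈ K, #{e ∈ E | lo e ≤ k} ≤ ∑ k ∈ K, #{e ∈ E | lo e ≤ k / 2} + r / 2 * #E := by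
    rw [hswap, hswap, mul_comm, ← smul_eq_mul, ← sum_const, ← sum_add_distrib]
    exact sum_le_sum fun e _ => card_filter_Icc_le_le_card_filter_Icc_le_div_two_add (lo e) r
  rw [card_edgeFinset_top_eq_card_choose_two] at hhalf
  omega

end Labelling

theorem card_le_sup_sub_sInf_add_one (s : Finset ℕ) : #s ≤ s.sup id - sInf (s : Set ℕ) + 1 := by
  have : s ⊆ Icc (sInf (s : Set ℕ)) (s.sup id) := fun c hc =>
    mem_Icc.2 ⟨Nat.sInf_le hc, le_sup (f := id) hc⟩
  have := card_le_card this
  rw [Nat.card_Icc] at this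
  omega

theorem metric_edge_labelling_odd_general (n r : ℕ)
    (S : Sym2 (Fin n) → Finset ℕ)
    (hne : ∀ e : Sym2 (Fin n), ¬e.IsDiag → (S e).Nonempty)
    (hsub : ∀ e : Sym2 (Fin n), ¬e.IsDiag → S e ⊆ Finset.Icc 1 r)
    (htri : ∀ x y z : Fin n, x ≠ y → y ≠ z → x ≠ z →
      ∀ a ∈ S s(x, y), ∀ b ∈ S s(y, z), ∀ c ∈ S s(x, z),
        a + b ≥ c ∧ a + c ≥ b ∧ b + c ≥ a) :
    ∑ e ∈ Finset.univ.filter (fun e : Sym2 (Fin n) => ¬e.IsDiag), (S e).card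
      ≤ mval r * n.choose 2 + r * n := by
  set lo : Sym2 (Fin n) → ℕ := fun e => sInf (S e : Set ℕ)
  set hi : Sym2 (Fin n) → ℕ := fun e => (S e).sup id
  set E := (⊤ : SimpleGraph (Fin n)).edgeFinset
  have hE : univ.filter (fun e : Sym2 (Fin n) => ¬e.IsDiag) = E := by ext; simp [E]
  have hlo_mem : ∀ e ∈ E, lo e ∈ S e := fun e he =>
    Nat.sInf_mem (hne e (by simpa [E] using he))
  have hsubE : ∀ e ∈ E, S e ⊆ Icc 1 r := fun e he => hsub e (by simpa [E] using he)
  have hmetric : ∀ x y z, x ≠ y → y ≠ z → x ≠ z → hi s(x, z) ≤ lo s(x, y) + lo s(y, z) :=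
    fun x y z hxy hyz hxz => Finset.sup_le fun c hc => (htri x y z hxy hyz hxz _
      (hlo_mem _ (by simpa [E])) _ (hlo_mem _ (by simpa [E])) c hc).1
  have hspread := sum_hi_sub_lo_le lo hi
    (fun e he => (mem_Icc.1 (hsubE e he (hlo_mem e he))).1)
    (fun e he => Finset.sup_le fun c hc => (mem_Icc.1 (hsubE e he hc)).2)
    (fun e he => le_sup (f := id) (hlo_mem e he)) hmetric
  rw [Fintype.card_fin] at hspread
  have hmval : mval r = r / 2 + 1 := by unfold mval; omega
  calc ∑ e ∈ univ.filter (fun e : Sym2 (Fin n) => ¬e.IsDiag), #(S e)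
      ≤ ∑ e ∈ E, (hi e - lo e + 1) :=
        hE ▸ sum_le_sum fun e _ => card_le_sup_sub_sInf_add_one (S e)
    _ = ∑ e ∈ E, (hi e - lo e) + n.choose 2 := by
        rw [sum_add_distrib, sum_const, smul_eq_mul, mul_one,
          card_edgeFinset_top_eq_card_choose_two, Fintype.card_fin]
    _ ≤ mval r * n.choose 2 + r * n := by
        rw [hmval]
        nlinarith [Nat.div_le_self n 2, Nat.sub_le r 1]

theorem metric_edge_labelling_odd (n r : ℕ) (hr : 0 < r) (hro : Odd r)
    (S : Sym2 (Fin n) → Finset ℕ)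
    (hne : ∀ e : Sym2 (Fin n), ¬e.IsDiag → (S e).Nonempty)
    (hsub : ∀ e : Sym2 (Fin n), ¬e.IsDiag → S e ⊆ Finset.Icc 1 r)
    (htri : ∀ x y z : Fin n, x ≠ y → y ≠ z → x ≠ z →
      ∀ a ∈ S s(x, y), ∀ b ∈ S s(y, z), ∀ c ∈ S s(x, z),
        a + b ≥ c ∧ a + c ≥ b ∧ b + c ≥ a) :
    ∑ e ∈ Finset.univ.filter (fun e : Sym2 (Fin n) => ¬e.IsDiag), (S e).card
      ≤ mval r * n.choose 2 + r * n :=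
  metric_edge_labelling_odd_general n r S hne hsub htri
end

section
/- Let ε > 0 and let r be an even positive integer. Suppose S assigns to each edge f of Kₙ a nonempty subset S(f) ⊆ {1,...,r} with Σ_f |S(f)| ≥ (1+ε)·C(n,2)·(r/2+1). Then there are at least (ε/10)·C(n,3) triangles {e,f,g} of Kₙ for which some choice a ∈ S(e), b ∈ S(f), c ∈ S(g) violates the triangle inequality. -/
/-! Each edge lies in `n - 2` triangles, so the triangle weights `|S e| + |S f| + |S g|` sum to
`(n - 2) Σ_e |S e| ≥ 3 (1 + ε) (r/2 + 1) C(n, 3)`. In a triangle without a non-metric choice each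
set lies between its own minimum and the sum of the other two minima, which caps the weight at
`3 (r/2 + 1)`; every triangle has weight at most `3 r`. Comparing the two counts gives at least
`ε C(n, 3)` triangles with a non-metric choice. -/

open Finset

namespace Finset

variable {α : Type*} [DecidableEq α]

theorem card_filter_powersetCard_superset [Fintype α] (s : Finset α) :
    #{t ∈ powersetCard (#s + 1) (univ : Finset α) | s ⊆ t} = Fintype.card α - #s := by
  have himage : {t ∈ powersetCard (#s + 1) (univ : Finset α) | s ⊆ t} = sᶜ.image (insert · s) := by
    ext t
    rw [mem_filter, mem_powersetCard_univ, mem_image, and_comm, eq_comm, ← exists_eq_insert_iff]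
    simp only [mem_compl]
  rw [himage, card_image_of_injOn, card_compl]
  intro a ha b hb hab
  have : a ∈ insert b s := by simp only at hab; exact hab ▸ mem_insert_self a s
  exact (mem_insert.1 this).resolve_right (mem_compl.1 ha)

theorem filter_sym2_not_isDiag_triple {x y z : α} (hxy : x ≠ y) (hyz : y ≠ z) (hxz : x ≠ z) :
    ({x, y, z} : Finset α).sym2.filter (¬·.IsDiag) = {s(x, y), s(y, z), s(x, z)} := by
  ext e
  induction e using Sym2.ind with
  | _ u v =>
    simp only [mem_filter, mem_sym2_iff, Sym2.mem_iff, forall_eq_or_imp, forall_eq,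
      Sym2.mk_isDiag_iff, mem_insert, mem_singleton, Sym2.eq_iff]
    grind

theorem sum_sym2_not_isDiag_triple {M : Type*} [AddCommMonoid M] (f : Sym2 α → M) {x y z : α}
    (hxy : x ≠ y) (hyz : y ≠ z) (hxz : x ≠ z) :
    ∑ e ∈ ({x, y, z} : Finset α).sym2.filter (¬·.IsDiag), f e =
      f s(x, y) + f s(y, z) + f s(x, z) := by
  rw [filter_sym2_not_isDiag_triple hxy hyz hxz, sum_insert (by simp; grind),
    sum_insert (by simp; grind), sum_singleton, add_assoc]

theorem sum_powersetCard_three_sum_sym2 [Fintype α] {M : Type*} [AddCommMonoid M]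
    (f : Sym2 α → M) :
    ∑ t ∈ powersetCard 3 univ, ∑ e ∈ t.sym2.filter (¬·.IsDiag), f e =
      (Fintype.card α - 2) • ∑ e ∈ univ.filter (¬·.IsDiag), f e := by
  rw [sum_comm' (t' := univ.filter (¬·.IsDiag))
    (s' := fun e => {t ∈ powersetCard 3 univ | e.toFinset ⊆ t}) (by
      intro t e
      simp only [mem_powersetCard, subset_iff, mem_univ, implies_true, true_and, mem_filter,
        mem_sym2_iff, Sym2.mem_toFinset]
      tauto), smul_sum]
  refine sum_congr rfl fun e he => ?_
  have h2 := Sym2.card_toFinset_of_not_isDiag e (mem_filter.1 he).2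
  rw [sum_const, show 3 = #e.toFinset + 1 by rw [h2], card_filter_powersetCard_superset, h2]

theorem exists_eq_triple_sum_sym2 {M : Type*} [AddCommMonoid M] (f : Sym2 α → M) {t : Finset α}
    (ht : #t = 3) : ∃ x y z, x ≠ y ∧ y ≠ z ∧ x ≠ z ∧ t = {x, y, z} ∧
      ∑ e ∈ t.sym2.filter (¬·.IsDiag), f e = f s(x, y) + f s(y, z) + f s(x, z) := by
  obtain ⟨x, y, z, hxy, hxz, hyz, rfl⟩ := card_eq_three.1 ht
  exact ⟨x, y, z, hxy, hyz, hxz, rfl, sum_sym2_not_isDiag_triple f hxy hyz hxz⟩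

theorem sum_le_mul_card_add_mul_card_filter {ι R : Type*} [CommRing R] [PartialOrder R]
    [IsOrderedRing R] (s : Finset ι) (p : ι → Prop) [DecidablePred p] (w : ι → R) {m M : R}
    (hM : ∀ i ∈ s, p i → w i ≤ M) (hm : ∀ i ∈ s, ¬p i → w i ≤ m) :
    ∑ i ∈ s, w i ≤ m * #s + (M - m) * #{i ∈ s | p i} := by
  have hp := sum_le_card_nsmul _ w M fun i hi => hM i (mem_filter.1 hi).1 (mem_filter.1 hi).2
  have hnp := sum_le_card_nsmul _ w m fun i hi => hm i (mem_filter.1 hi).1 (mem_filter.1 hi).2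
  rw [nsmul_eq_mul] at hp hnp
  rw [← sum_filter_add_sum_filter_not s p, ← card_filter_add_card_filter_not p (s := s)]
  push_cast
  linear_combination hp + hnp

theorem card_le_add_one_sub_min' {s : Finset ℕ} (hs : s.Nonempty) {u : ℕ}
    (h : ∀ x ∈ s, x ≤ u) : #s ≤ u + 1 - s.min' hs := by
  simpa using card_le_card fun x hx => mem_Icc.2 ⟨s.min'_le x hx, h x hx⟩

end Finset

theorem card_add_card_add_card_le_of_triangle_ineq {k : ℕ} {A B C : Finset ℕ}
    (hA : A.Nonempty) (hB : B.Nonempty) (hC : C.Nonempty)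
    (hAk : A ⊆ Icc 1 (2 * k)) (hBk : B ⊆ Icc 1 (2 * k)) (hCk : C ⊆ Icc 1 (2 * k))
    (h : ∀ a ∈ A, ∀ b ∈ B, ∀ c ∈ C, a ≤ b + c ∧ b ≤ a + c ∧ c ≤ a + b) :
    #A + #B + #C ≤ 3 * (k + 1) := by
  have hα := mem_Icc.1 (hAk (A.min'_mem hA))
  have hβ := mem_Icc.1 (hBk (B.min'_mem hB))
  have hγ := mem_Icc.1 (hCk (C.min'_mem hC))
  have hmin := h _ (A.min'_mem hA) _ (B.min'_mem hB) _ (C.min'_mem hC)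
  have cA := card_le_add_one_sub_min' hA fun a ha =>
    le_min (h a ha _ (B.min'_mem hB) _ (C.min'_mem hC)).1 (mem_Icc.1 (hAk ha)).2
  have cB := card_le_add_one_sub_min' hB fun b hb =>
    le_min (h _ (A.min'_mem hA) b hb _ (C.min'_mem hC)).2.1 (mem_Icc.1 (hBk hb)).2
  have cC := card_le_add_one_sub_min' hC fun c hc =>
    le_min (h _ (A.min'_mem hA) _ (B.min'_mem hB) c hc).2.2 (mem_Icc.1 (hCk hc)).2
  omega

theorem card_sub_two_mul_sum_sym2_le {α : Type*} [Fintype α] [DecidableEq α] (f : Sym2 α → ℝ)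
    (p : Finset α → Prop) [DecidablePred p] {m M : ℝ}
    (hM : ∀ t ∈ powersetCard 3 univ, p t → ∑ e ∈ t.sym2.filter (¬·.IsDiag), f e ≤ M)
    (hm : ∀ t ∈ powersetCard 3 univ, ¬p t → ∑ e ∈ t.sym2.filter (¬·.IsDiag), f e ≤ m) :
    ((Fintype.card α - 2 : ℕ) : ℝ) * ∑ e ∈ univ.filter (¬·.IsDiag), f e ≤
      m * (Fintype.card α).choose 3 + (M - m) * #{t ∈ powersetCard 3 univ | p t} := by
  rw [← nsmul_eq_mul, ← sum_powersetCard_three_sum_sym2]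
  simpa using sum_le_mul_card_add_mul_card_filter _ p _ hM hm

theorem mul_choose_three_le_card_filter_of_metric {α : Type*} [Fintype α] [DecidableEq α]
    (S : Sym2 α → Finset ℕ) (k : ℕ) (ε : ℝ) (p : Finset α → Prop) [DecidablePred p]
    (hne : ∀ e : Sym2 α, ¬e.IsDiag → (S e).Nonempty)
    (hsub : ∀ e : Sym2 α, ¬e.IsDiag → S e ⊆ Icc 1 (2 * k))
    (hbig : (1 + ε) * (Fintype.card α).choose 2 * (k + 1) ≤
      ∑ e ∈ univ.filter (¬·.IsDiag), (#(S e) : ℝ))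
    (hmetric : ∀ x y z, x ≠ y → y ≠ z → x ≠ z → ¬p {x, y, z} →
      ∀ a ∈ S s(x, y), ∀ b ∈ S s(y, z), ∀ c ∈ S s(x, z), a ≤ b + c ∧ b ≤ a + c ∧ c ≤ a + b) :
    ε * (Fintype.card α).choose 3 ≤ #{t ∈ powersetCard 3 univ | p t} := by
  have hedge {x y : α} (hxy : x ≠ y) : ¬s(x, y).IsDiag := Sym2.mk_isDiag_iff.not.2 hxy
  have hcard {x y : α} (hxy : x ≠ y) : (#(S s(x, y)) : ℝ) ≤ 2 * k := by
    exact_mod_cast (by simpa using card_le_card (hsub _ (hedge hxy)) : #(S s(x, y)) ≤ 2 * k)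
  have hcount := card_sub_two_mul_sum_sym2_le (fun e => (#(S e) : ℝ)) p
    (M := 3 * (2 * k)) (m := 3 * (k + 1)) ?_ ?_
  · set N := Fintype.card α
    have hchoose : (N.choose 2 : ℝ) * (N - 2 : ℕ) = 3 * N.choose 3 := by
      exact_mod_cast (Nat.choose_succ_right_eq N 2).symm.trans (mul_comm _ _)
    have hk : (0 : ℝ) < k + 1 := by positivity
    have hb : (0 : ℝ) ≤ #{t ∈ powersetCard 3 univ | p t} := by positivity
    have hsum := mul_le_mul_of_nonneg_right hbig (Nat.cast_nonneg (N - 2))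
    have h3 : (1 + ε) * (k + 1) * (3 * N.choose 3) ≤
        3 * (k + 1) * N.choose 3 +
          (3 * (2 * k) - 3 * (k + 1)) * #{t ∈ powersetCard 3 univ | p t} := by
      rw [← hchoose]; linarith
    refine le_of_mul_le_mul_right ?_ hk
    linarith
  · intro t ht _
    obtain ⟨x, y, z, hxy, hyz, hxz, -, hw⟩ :=
      exists_eq_triple_sum_sym2 (fun e => (#(S e) : ℝ)) (mem_powersetCard_univ.1 ht)
    linarith [hcard hxy, hcard hyz, hcard hxz]
  · intro t ht hp
    obtain ⟨x, y, z, hxy, hyz, hxz, rfl, hw⟩ :=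
      exists_eq_triple_sum_sym2 (fun e => (#(S e) : ℝ)) (mem_powersetCard_univ.1 ht)
    rw [hw]
    exact_mod_cast card_add_card_add_card_le_of_triangle_ineq (hne _ (hedge hxy))
      (hne _ (hedge hyz)) (hne _ (hedge hxz)) (hsub _ (hedge hxy)) (hsub _ (hedge hyz))
      (hsub _ (hedge hxz)) (hmetric x y z hxy hyz hxz hp)

theorem supersaturation_even_general (ε : ℝ) (hε : 0 < ε) (n r : ℕ) (hre : Even r)
    (S : Sym2 (Fin n) → Finset ℕ)
    (hne : ∀ e : Sym2 (Fin n), ¬e.IsDiag → (S e).Nonempty)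
    (hsub : ∀ e : Sym2 (Fin n), ¬e.IsDiag → S e ⊆ Finset.Icc 1 r)
    (hbig : (1 + ε) * (n.choose 2 : ℝ) * ((r : ℝ) / 2 + 1) ≤
      ∑ e ∈ Finset.univ.filter (fun e : Sym2 (Fin n) => ¬e.IsDiag), ((S e).card : ℝ)) :
    ε / 10 * (n.choose 3 : ℝ) ≤
      (Nat.card {T : Finset (Fin n) | ∃ x y z : Fin n, x ≠ y ∧ y ≠ z ∧ x ≠ z ∧
        T = {x, y, z} ∧ ∃ a ∈ S s(x, y), ∃ b ∈ S s(y, z), ∃ c ∈ S s(x, z),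
          a + b < c ∨ a + c < b ∨ b + c < a} : ℝ) := by
  classical
  obtain ⟨k, rfl⟩ := hre
  rw [← two_mul] at hsub
  have hhalf : ((k + k : ℕ) : ℝ) / 2 + 1 = k + 1 := by push_cast; ring
  rw [hhalf] at hbig
  rw [Nat.card_coe_set_eq, Set.ncard_eq_toFinset_card', Set.toFinset_ofPred]
  refine le_trans (le_trans ?_ (mul_choose_three_le_card_filter_of_metric S k ε _ hne hsub
    (by simpa using hbig) ?_)) (Nat.cast_le.2 (card_le_card (filter_subset_filter _
      (subset_univ (powersetCard 3 univ)))))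
  · rw [Fintype.card_fin]
    gcongr
    linarith
  · intro x y z hxy hyz hxz hp a ha b hb c hc
    by_contra hviol
    exact hp ⟨x, y, z, hxy, hyz, hxz, rfl, a, ha, b, hb, c, hc, by omega⟩

theorem supersaturation_even (ε : ℝ) (hε : 0 < ε) (n r : ℕ) (hr : 0 < r) (hre : Even r)
    (S : Sym2 (Fin n) → Finset ℕ)
    (hne : ∀ e : Sym2 (Fin n), ¬e.IsDiag → (S e).Nonempty)
    (hsub : ∀ e : Sym2 (Fin n), ¬e.IsDiag → S e ⊆ Finset.Icc 1 r)
    (hbig : (1 + ε) * (n.choose 2 : ℝ) * ((r : ℝ) / 2 + 1) ≤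
      ∑ e ∈ Finset.univ.filter (fun e : Sym2 (Fin n) => ¬e.IsDiag), ((S e).card : ℝ)) :
    ε / 10 * (n.choose 3 : ℝ) ≤
      (Nat.card {T : Finset (Fin n) | ∃ x y z : Fin n, x ≠ y ∧ y ≠ z ∧ x ≠ z ∧
        T = {x, y, z} ∧ ∃ a ∈ S s(x, y), ∃ b ∈ S s(y, z), ∃ c ∈ S s(x, z),
          a + b < c ∨ a + c < b ∨ b + c < a} : ℝ) :=
  supersaturation_even_general ε hε n r hre S hne hsub hbig
end

section
/- For real x ∈ (0,1), define f(x) = H(x²)/x where H(y) = −y·log₂ y − (1−y)·log₂(1−y) is the binary entropy function. Then f attains a maximum on (0,1), and the maximizer c* satisfies 0.48 < c* < 0.5, with (2/3)·f(c*) < 1.082. -/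
/-!
Write `f x = H (x²) / x` (`kwRatio`). With `h` the binary entropy in nats,
`x² log 2 · f' x = φ (x²)` where `φ y = h y + 2 log (1 - y)` (`kwPhi`). Since `φ` is concave on `[0, 1)` and `φ 0 = 0`, the signs
`φ (0.49²) ≥ 0 ≥ φ (0.492²)` make `f` increase on `(0, 0.49]` and decrease on `[0.492, 1)`, so
`f` attains its maximum over `(0, 1)` in `[0.49, 0.492]`. There the Gibbs inequality
`h y ≤ -y log p - (1 - y) log (1 - p)` at `p = 0.241 ≈ 0.491²` gives `f < 1.623 = 3/2 · 1.082`.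
The few logarithms involved are evaluated by truncating the series of `log (1 - x)`.
-/

/-- The binary entropy function. -/
noncomputable def binEnt (y : ℝ) : ℝ :=
  -y * Real.logb 2 y - (1 - y) * Real.logb 2 (1 - y)

open Real Set

lemma log_one_sub_mem_Icc {x : ℝ} (hx₀ : 0 ≤ x) (hx₁ : x < 1) (n : ℕ) :
    log (1 - x) ∈ Icc (-(∑ i ∈ Finset.range n, x ^ (i + 1) / (i + 1)) - x ^ (n + 1) / (1 - x))
      (-(∑ i ∈ Finset.range n, x ^ (i + 1) / (i + 1)) + x ^ (n + 1) / (1 - x)) := by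
  have h := abs_log_sub_add_sum_range_le (x := x) (by rwa [abs_of_nonneg hx₀]) n
  rw [abs_of_nonneg hx₀, abs_le] at h
  constructor <;> linarith [h.1, h.2]

lemma mul_log_le_mul_log_add_sub {p y : ℝ} (hp : 0 < p) (hy : 0 ≤ y) :
    y * log p ≤ y * log y + (p - y) := by
  rcases hy.eq_or_lt with rfl | hy
  · simpa using hp.le
  · have h := log_le_sub_one_of_pos (div_pos hp hy)
    rw [log_div hp.ne' hy.ne'] at h
    have := mul_le_mul_of_nonneg_left h hy.le
    rw [mul_sub, mul_sub, mul_div_cancel₀ _ hy.ne'] at this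
    linarith

lemma binEntropy_le_neg_mul_log_sub_mul_log {p y : ℝ} (hp₀ : 0 < p) (hp₁ : p < 1)
    (hy₀ : 0 ≤ y) (hy₁ : y ≤ 1) :
    binEntropy y ≤ -y * log p - (1 - y) * log (1 - p) := by
  have h₀ := mul_log_le_mul_log_add_sub hp₀ hy₀
  have h₁ := mul_log_le_mul_log_add_sub (sub_pos.2 hp₁) (sub_nonneg.2 hy₁)
  rw [binEntropy_eq_negMulLog_add_negMulLog_one_sub, negMulLog, negMulLog]
  linarith

lemma concaveOn_log_one_sub : ConcaveOn ℝ (Iio 1) fun y => log (1 - y) := by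
  have := strictConcaveOn_log_Ioi.concaveOn.comp_affineMap
    (AffineMap.const ℝ ℝ (1 : ℝ) - AffineMap.id ℝ ℝ)
  have hs : ⇑(AffineMap.const ℝ ℝ (1 : ℝ) - AffineMap.id ℝ ℝ) ⁻¹' Ioi 0 = Iio 1 := by
    ext y; simp
  have hg : log ∘ ⇑(AffineMap.const ℝ ℝ (1 : ℝ) - AffineMap.id ℝ ℝ) = fun y => log (1 - y) := by
    funext y; simp
  rwa [hs, hg] at this

lemma exists_isMaxOn_of_monotoneOn_of_antitoneOn {α β : Type*} [ConditionallyCompleteLinearOrder α]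
    [TopologicalSpace α] [OrderTopology α] [LinearOrder β] [TopologicalSpace β]
    [OrderClosedTopology β] {f : α → β} {l a b r : α} (hab : a ≤ b)
    (hf : ContinuousOn f (Icc a b)) (hmono : MonotoneOn f (Ioc l a))
    (hanti : AntitoneOn f (Ico b r)) : ∃ c ∈ Icc a b, IsMaxOn f (Ioo l r) c := by
  obtain ⟨c, hc, hmax⟩ := isCompact_Icc.exists_isMaxOn (nonempty_Icc.2 hab) hf
  refine ⟨c, hc, fun x hx => ?_⟩
  rcases le_or_gt x a with hxa | hax
  · exact (hmono ⟨hx.1, hxa⟩ ⟨hx.1.trans_le hxa, le_rfl⟩ hxa).trans (hmax ⟨le_rfl, hab⟩)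
  rcases le_or_gt b x with hbx | hxb
  · exact (hanti ⟨le_rfl, hbx.trans_lt hx.2⟩ ⟨hbx, hx.2⟩ hbx).trans (hmax ⟨hab, le_rfl⟩)
  · exact hmax ⟨hax.le, hxb.le⟩

lemma binEnt_eq_binEntropy_div (y : ℝ) : binEnt y = binEntropy y / log 2 := by
  simp only [binEnt, binEntropy, logb, log_inv]
  ring

noncomputable def kwRatio (x : ℝ) : ℝ := binEnt (x ^ 2) / x

noncomputable def kwPhi (y : ℝ) : ℝ := binEntropy y + 2 * log (1 - y)

lemma kwRatio_eq : kwRatio = fun x => binEntropy (x ^ 2) / log 2 / x := by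
  funext x
  rw [kwRatio, binEnt_eq_binEntropy_div]

lemma hasDerivAt_kwRatio {x : ℝ} (hx₀ : x ≠ 0) (hx₁ : x ^ 2 ≠ 1) :
    HasDerivAt kwRatio (kwPhi (x ^ 2) / (x ^ 2 * log 2)) x := by
  have hB := HasDerivAt.comp (h := fun x : ℝ => x ^ 2) x
    (hasDerivAt_binEntropy (pow_ne_zero 2 hx₀) hx₁) (hasDerivAt_pow 2 x)
  rw [kwRatio_eq]
  refine ((hB.div_const (log 2)).div (hasDerivAt_id x) hx₀).congr_deriv ?_
  simp only [kwPhi, binEntropy, log_inv, id, Function.comp]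
  field_simp
  ring

lemma continuousAt_kwRatio {x : ℝ} (hx : x ≠ 0) : ContinuousAt kwRatio x := by
  rw [kwRatio_eq]
  fun_prop (disch := exact hx)

lemma kwPhi_concaveOn : ConcaveOn ℝ (Ico 0 1) kwPhi :=
  (strictConcave_binEntropy.concaveOn.subset Ico_subset_Icc_self (convex_Ico 0 1)).add
    ((concaveOn_log_one_sub.subset (fun _ hy => hy.2) (convex_Ico 0 1)).smul zero_le_two)

lemma kwPhi_zero : kwPhi 0 = 0 := by simp [kwPhi]

lemma kwPhi_0_2401_nonneg : 0 ≤ kwPhi 0.2401 := by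
  have h₁ : -0.2746 ≤ log 0.7599 := by
    have := (log_one_sub_mem_Icc (x := 0.2401) (by norm_num) (by norm_num) 7).1
    norm_num [Finset.sum_range_succ] at this ⊢; linarith
  have h₂ : log 0.98 ≤ -0.0202 := by
    have := (log_one_sub_mem_Icc (x := 0.02) (by norm_num) (by norm_num) 3).2
    norm_num [Finset.sum_range_succ] at this ⊢; linarith
  have hsq : log 0.2401 = 2 * (log 0.98 - log 2) := by
    rw [show (0.2401 : ℝ) = (0.98 / 2) ^ 2 by norm_num, log_pow, log_div (by norm_num) two_ne_zero]
    push_cast; ring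
  rw [kwPhi, binEntropy_eq_negMulLog_add_negMulLog_one_sub, negMulLog, negMulLog, hsq,
    show (1 : ℝ) - 0.2401 = 0.7599 by norm_num]
  linarith [log_two_gt_d9]

lemma kwPhi_0_242064_nonpos : kwPhi 0.242064 ≤ 0 := by
  have h₁ : log 0.757936 ≤ -0.2771 := by
    have := (log_one_sub_mem_Icc (x := 0.242064) (by norm_num) (by norm_num) 7).2
    norm_num [Finset.sum_range_succ] at this ⊢; linarith
  have h₂ : -0.01613 ≤ log 0.984 := by
    have := (log_one_sub_mem_Icc (x := 0.016) (by norm_num) (by norm_num) 3).1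
    norm_num [Finset.sum_range_succ] at this ⊢; linarith
  have hsq : log 0.242064 = 2 * (log 0.984 - log 2) := by
    rw [show (0.242064 : ℝ) = (0.984 / 2) ^ 2 by norm_num, log_pow,
      log_div (by norm_num) two_ne_zero]
    push_cast; ring
  rw [kwPhi, binEntropy_eq_negMulLog_add_negMulLog_one_sub, negMulLog, negMulLog, hsq,
    show (1 : ℝ) - 0.242064 = 0.757936 by norm_num]
  linarith [log_two_lt_d9]

lemma kwPhi_nonneg {y : ℝ} (hy : y ∈ Icc 0 0.2401) : 0 ≤ kwPhi y := by
  have h := kwPhi_concaveOn.ge_on_segment (x := 0) (y := 0.2401) (by norm_num) (by norm_num)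
    (by rwa [segment_eq_Icc (by norm_num)])
  rwa [kwPhi_zero, min_eq_left kwPhi_0_2401_nonneg] at h

lemma kwPhi_nonpos {y : ℝ} (hy : y ∈ Ico 0.242064 1) : kwPhi y ≤ 0 :=
  (kwPhi_concaveOn.right_le_of_le_left'' (x := 0.2401) (by norm_num)
    ⟨by linarith [hy.1], hy.2⟩ (by norm_num) hy.1
    (kwPhi_0_242064_nonpos.trans kwPhi_0_2401_nonneg)).trans kwPhi_0_242064_nonpos

lemma kwRatio_monotoneOn : MonotoneOn kwRatio (Ioc 0 0.49) := by
  refine monotoneOn_of_hasDerivWithinAt_nonneg (f' := fun x => kwPhi (x ^ 2) / (x ^ 2 * log 2))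
    (convex_Ioc 0 0.49)
    (fun x hx => (continuousAt_kwRatio hx.1.ne').continuousWithinAt)
    (fun x hx => ?_) (fun x hx => ?_)
  all_goals rw [interior_Ioc] at hx
  · exact (hasDerivAt_kwRatio hx.1.ne' (by nlinarith [hx.1, hx.2])).hasDerivWithinAt
  · exact div_nonneg (kwPhi_nonneg ⟨by positivity, by nlinarith [hx.1, hx.2]⟩)
      (by positivity)

lemma kwRatio_antitoneOn : AntitoneOn kwRatio (Ico 0.492 1) := by
  refine antitoneOn_of_hasDerivWithinAt_nonpos (f' := fun x => kwPhi (x ^ 2) / (x ^ 2 * log 2))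
    (convex_Ico 0.492 1)
    (fun x hx => (continuousAt_kwRatio (by linarith [hx.1])).continuousWithinAt)
    (fun x hx => ?_) (fun x hx => ?_)
  all_goals rw [interior_Ico] at hx
  · exact (hasDerivAt_kwRatio (by linarith [hx.1]) (by nlinarith [hx.1, hx.2])).hasDerivWithinAt
  · exact div_nonpos_of_nonpos_of_nonneg
      (kwPhi_nonpos ⟨by nlinarith [hx.1], by nlinarith [hx.1, hx.2]⟩)
      (by positivity)

lemma kwRatio_lt_of_mem_Icc {x : ℝ} (hx : x ∈ Icc 0.49 0.492) : kwRatio x < 1.623 := by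
  obtain ⟨hx₁, hx₂⟩ := hx
  have hx₀ : 0 < x := by linarith
  have hgibbs := binEntropy_le_neg_mul_log_sub_mul_log (p := 0.241) (y := x ^ 2)
    (by norm_num) (by norm_num) (by positivity) (by nlinarith)
  have hsq : log 0.241 = log 0.964 - 2 * log 2 := by
    rw [show (0.241 : ℝ) = (0.964 / 2) / 2 by norm_num, log_div (by norm_num) two_ne_zero,
      log_div (by norm_num) two_ne_zero]
    ring
  have h₁ : -0.27576 ≤ log 0.759 := by
    have := (log_one_sub_mem_Icc (x := 0.241) (by norm_num) (by norm_num) 9).1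
    norm_num [Finset.sum_range_succ] at this ⊢; linarith
  have h₂ : -0.03667 ≤ log 0.964 := by
    have := (log_one_sub_mem_Icc (x := 0.036) (by norm_num) (by norm_num) 3).1
    norm_num [Finset.sum_range_succ] at this ⊢; linarith
  rw [hsq, show (1 : ℝ) - 0.241 = 0.759 by norm_num] at hgibbs
  rw [kwRatio, binEnt_eq_binEntropy_div, div_div, div_lt_iff₀ (by positivity)]
  have p₁ := mul_le_mul_of_nonneg_left h₂ (sq_nonneg x)
  have p₂ := mul_le_mul_of_nonneg_left h₁ (show 0 ≤ 1 - x ^ 2 by nlinarith)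
  have p₃ : (2 * x ^ 2 - 1.623 * x) * log 2 ≤ (2 * x ^ 2 - 1.623 * x) * 0.6931471803 :=
    mul_le_mul_of_nonpos_left log_two_gt_d9.le (by nlinarith)
  nlinarith [mul_nonneg (sub_nonneg.2 hx₁) (sub_nonneg.2 hx₂)]

theorem kleitman_winston_constant :
    ∃ c : ℝ, c ∈ Set.Ioo (0 : ℝ) 1 ∧
      (∀ x ∈ Set.Ioo (0 : ℝ) 1, binEnt (x ^ 2) / x ≤ binEnt (c ^ 2) / c) ∧
      0.48 < c ∧ c < 0.5 ∧ 2 / 3 * (binEnt (c ^ 2) / c) < 1.082 := by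
  obtain ⟨c, ⟨hc₁, hc₂⟩, hmax⟩ := exists_isMaxOn_of_monotoneOn_of_antitoneOn (by norm_num)
    (fun x hx => (continuousAt_kwRatio (by linarith [hx.1])).continuousWithinAt)
    kwRatio_monotoneOn kwRatio_antitoneOn
  have hval := kwRatio_lt_of_mem_Icc ⟨hc₁, hc₂⟩
  refine ⟨c, ⟨by linarith, by linarith⟩, fun x hx => hmax hx, by linarith, by linarith, ?_⟩
  unfold kwRatio at hval
  linarith
end

section
/- Let G be a C₄-free graph on n vertices and let Z ⊆ V(G), and for u ∈ V(G) let d_Z(u) = |N_G(u) ∩ Z|. Then the proper square satisfies e(G²[Z]) ≥ Σ_{u ∈ V(G)} ⌊d_Z(u)/2⌋; in particular, if Σ_{u ∈ V(G)} d_Z(u) ≥ |V(G)| + 2k, then e(G²[Z]) ≥ k. -/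
def pairUp {α : Type*} : List α → List (α × α)
  | a :: b :: t => (a, b) :: pairUp t
  | _ => []

lemma pairUp_nil_cases {α : Type*} {l : List α}
    (hl : ∀ (a b : α) (t : List α), l = a :: b :: t → False) : pairUp l = [] := by
  cases l with
  | nil => rfl
  | cons a t =>
    cases t with
    | nil => rfl
    | cons b t' => exact absurd rfl (hl a b t')

lemma pairUp_length {α : Type*} (l : List α) : (pairUp l).length = l.length / 2 := by
  induction l using pairUp.induct with
  | case1 a b t ih => simp only [pairUp, List.length_cons, ih]; omega
  | case2 l hl =>
      rw [pairUp_nil_cases hl]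
      cases l with
      | nil => simp
      | cons a t =>
        cases t with
        | nil => simp
        | cons b t' => exact absurd rfl (hl a b t')

lemma pairUp_mem {α : Type*} {l : List α} {p : α × α} (hp : p ∈ pairUp l) :
    p.1 ∈ l ∧ p.2 ∈ l := by
  induction l using pairUp.induct with
  | case1 a b t ih =>
      simp only [pairUp, List.mem_cons] at hp
      rcases hp with rfl | hp
      · simp
      · have := ih hp; simp [this.1, this.2]
  | case2 l hl => rw [pairUp_nil_cases hl] at hp; simp at hp

lemma pairUp_ne {α : Type*} {l : List α} (hnd : l.Nodup) {p : α × α} (hp : p ∈ pairUp l) :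
    p.1 ≠ p.2 := by
  induction l using pairUp.induct with
  | case1 a b t ih =>
      simp only [pairUp, List.mem_cons] at hp
      simp only [List.nodup_cons, List.mem_cons] at hnd
      rcases hp with rfl | hp
      · exact fun hab => hnd.1 (Or.inl hab)
      · exact ih hnd.2.2 hp
  | case2 l hl => rw [pairUp_nil_cases hl] at hp; simp at hp

lemma pairUp_map_nodup {α : Type*} {l : List α} (hnd : l.Nodup) :
    ((pairUp l).map (fun p => s(p.1, p.2))).Nodup := by
  induction l using pairUp.induct with
  | case1 a b t ih =>
      simp only [List.nodup_cons, List.mem_cons] at hnd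
      simp only [pairUp, List.map_cons, List.nodup_cons]
      refine ⟨?_, ih hnd.2.2⟩
      intro hmem
      simp only [List.mem_map] at hmem
      obtain ⟨p, hp, heq⟩ := hmem
      have hm := pairUp_mem hp
      rcases Sym2.eq_iff.mp heq with ⟨h1, h2⟩ | ⟨h1, h2⟩
      · exact hnd.1 (Or.inr (h1 ▸ hm.1))
      · exact hnd.1 (Or.inr (h2 ▸ hm.2))
  | case2 l hl => rw [pairUp_nil_cases hl]; simp

theorem square_edges_from_degree_sum (n : ℕ) (G : SimpleGraph (Fin n)) (h : C4Free G)
    (Z : Set (Fin n)) (k : ℕ) :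
    (∑ u : Fin n, Nat.card {v : Fin n | v ∈ Z ∧ G.Adj u v} / 2 ≤
      Nat.card ((properSquare G).induce Z).edgeSet) ∧
    ((∑ u : Fin n, Nat.card {v : Fin n | v ∈ Z ∧ G.Adj u v}) ≥ n + 2 * k →
      Nat.card ((properSquare G).induce Z).edgeSet ≥ k) := by
  classical
  have hfin : ∀ u : Fin n, ({v : Fin n | v ∈ Z ∧ G.Adj u v}).Finite := fun u => Set.toFinite _
  set N : Fin n → Finset (Fin n) := fun u => (hfin u).toFinset with hN
  have hNmem : ∀ u v, v ∈ N u ↔ v ∈ Z ∧ G.Adj u v := by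
    intro u v; simp [hN, Set.Finite.mem_toFinset]
  have hcard : ∀ u, Nat.card {v : Fin n | v ∈ Z ∧ G.Adj u v} = (N u).card := by
    intro u
    rw [Nat.card_coe_set_eq, Set.ncard_eq_toFinset_card _ (hfin u)]
  set L : Fin n → List (Fin n) := fun u => (N u).sort (· ≤ ·) with hL
  set E : Fin n → Finset (Sym2 (Fin n)) :=
    fun u => ((pairUp (L u)).map (fun p => s(p.1, p.2))).toFinset with hE
  have hLnodup : ∀ u, (L u).Nodup := fun u => (N u).sort_nodup _
  have hLmem : ∀ u v, v ∈ L u ↔ v ∈ N u := fun u v => (N u).mem_sort _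
  have hEcard : ∀ u, (E u).card = (N u).card / 2 := by
    intro u
    rw [hE, List.toFinset_card_of_nodup (pairUp_map_nodup (hLnodup u)), List.length_map,
      pairUp_length, hL, Finset.length_sort]
  have hEprop : ∀ u e, e ∈ E u →
      ∃ a b : Fin n, e = s(a, b) ∧ a ∈ Z ∧ b ∈ Z ∧ a ≠ b ∧ G.Adj u a ∧ G.Adj u b := by
    intro u e he
    simp only [hE, List.mem_toFinset, List.mem_map] at he
    obtain ⟨p, hp, rfl⟩ := he
    have hm := pairUp_mem hp
    have h1 := (hNmem u p.1).mp ((hLmem u p.1).mp hm.1)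
    have h2 := (hNmem u p.2).mp ((hLmem u p.2).mp hm.2)
    exact ⟨p.1, p.2, rfl, h1.1, h2.1, pairUp_ne (hLnodup u) hp, h1.2, h2.2⟩
  have hdisj : ∀ u ∈ (Finset.univ : Finset (Fin n)), ∀ u' ∈ (Finset.univ : Finset (Fin n)),
      u ≠ u' → Disjoint (E u) (E u') := by
    intro u _ u' _ huu
    rw [Finset.disjoint_left]
    intro e heu heu'
    obtain ⟨a, b, rfl, _, _, hab, ha, hb⟩ := hEprop u e heu
    obtain ⟨c, d, hcd, _, _, _, hc, hd⟩ := hEprop u' _ heu'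
    rcases Sym2.eq_iff.mp hcd with ⟨h1, h2⟩ | ⟨h1, h2⟩
    · subst h1; subst h2
      exact huu (h a b u u' hab ha.symm hb.symm hc.symm hd.symm)
    · subst h1; subst h2
      exact huu (h a b u u' hab ha.symm hb.symm hd.symm hc.symm)
  have hsum : (Finset.univ.biUnion E).card = ∑ u : Fin n, (N u).card / 2 := by
    rw [Finset.card_biUnion hdisj]
    exact Finset.sum_congr rfl fun u _ => hEcard u
  have himg : ((Finset.univ.biUnion E : Finset (Sym2 (Fin n))) : Set (Sym2 (Fin n))) ⊆
      Sym2.map (Subtype.val) '' ((properSquare G).induce Z).edgeSet := by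
    intro e he
    simp only [Finset.coe_biUnion, Finset.coe_univ, Set.mem_iUnion, Finset.mem_coe] at he
    obtain ⟨u, _, heu⟩ := he
    obtain ⟨a, b, rfl, haZ, hbZ, hab, ha, hb⟩ := hEprop u _ heu
    refine ⟨s(⟨a, haZ⟩, ⟨b, hbZ⟩), ?_, rfl⟩
    rw [SimpleGraph.mem_edgeSet]
    exact ⟨hab, u, ha.symm, hb⟩
  have hmain : ∑ u : Fin n, (N u).card / 2 ≤
      Nat.card ((properSquare G).induce Z).edgeSet := by
    calc ∑ u : Fin n, (N u).card / 2 = (Finset.univ.biUnion E).card := hsum.symm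
      _ = ((Finset.univ.biUnion E : Finset (Sym2 (Fin n))) : Set (Sym2 (Fin n))).ncard :=
          (Set.ncard_coe_finset _).symm
      _ ≤ (Sym2.map (Subtype.val) '' ((properSquare G).induce Z).edgeSet).ncard :=
          Set.ncard_le_ncard himg (Set.toFinite _)
      _ = ((properSquare G).induce Z).edgeSet.ncard :=
          Set.ncard_image_of_injective _ (Sym2.map.injective Subtype.val_injective)
      _ = Nat.card ((properSquare G).induce Z).edgeSet := (Nat.card_coe_set_eq _).symm
  constructor
  · simp_rw [hcard]; exact hmain
  · intro hge
    simp_rw [hcard] at hge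
    have h2 : (∑ u : Fin n, (N u).card) ≤ 2 * (∑ u : Fin n, (N u).card / 2) + n := by
      calc ∑ u : Fin n, (N u).card ≤ ∑ u : Fin n, (2 * ((N u).card / 2) + 1) :=
            Finset.sum_le_sum (fun u _ => by omega)
        _ = 2 * (∑ u : Fin n, (N u).card / 2) + n := by
            rw [Finset.sum_add_distrib, ← Finset.mul_sum]; simp
    omega
end
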